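/- Let f be an entire function satisfying: (M1) f(z) ≠ 0 whenever Im z ≤ 0; (M2) |f(z)| ≤ |f̄(z)| whenever Im z ≥ 0, where f̄(z) := conj(f(conj z)); (M3) for every m ∈ ℕ, z^m/f(z) → 0 as |z| → ∞ uniformly on {z : Im z ≤ 0}. Let δ ∈ (0,1) and let w be continuous on {Im z ≥ 0}, holomorphic on the open upper half-plane, with |w(z)| ≤ δ for all Im z ≥ 0. Then for every z with Im z > 0: (1/π)·∫_ℝ w(x)/(f̄(x)·(f̄(x) − w(x)·f(x))·(x − z)) dx = 2i·w(z)/(f̄(z)·(f̄(z) − w(z)·f(z))). -/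

import Mathlib

/-!
Put `g = w / (f̄ (f̄ - w f))`. Then the claim is the Cauchy integral formula
`∫_ℝ g(x) / (x - z) dx = 2πi g(z)` for the upper half-plane: (M1), (M2) and `|w| ≤ δ < 1` make `g`
continuous on the closed and holomorphic on the open half-plane, and (M3) makes it `O(1/|ζ|)` there.
For such `g` the function `F = (g - g(z)) / (· - z) + g(z) / (· - z̄)` is holomorphic in the
half-plane and `O(1/|ζ|²)`, so Cauchy's theorem on the rectangles `[-T, T] × [0, T]` gives
`∫_ℝ F = 0`, and what is left is `g(z)` times the Poisson integral
`∫_ℝ (1/(x - z) - 1/(x - z̄)) dx = 2πi`.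
-/

open Complex ComplexConjugate MeasureTheory Filter Topology Asymptotics Bornology

lemma ofReal_sub_ne_zero_of_im_ne {z : ℂ} (hz : z.im ≠ 0) (x : ℝ) : (x : ℂ) - z ≠ 0 := by
  intro h; apply hz; simpa using congrArg Complex.im h

lemma inv_ofReal_sub_sub_inv_ofReal_sub_conj {z : ℂ} (hz : 0 < z.im) (x : ℝ) :
    ((x : ℂ) - z)⁻¹ - ((x : ℂ) - conj z)⁻¹ =
      ((2 / z.im * (1 + ((x - z.re) / z.im) ^ 2)⁻¹ : ℝ) : ℂ) * I := by
  have hprod : ((x : ℂ) - z) * ((x : ℂ) - conj z) = (((x - z.re) ^ 2 + z.im ^ 2 : ℝ) : ℂ) := by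
    apply Complex.ext <;> simp [sq]; ring
  have hreal : 2 / z.im * (1 + ((x - z.re) / z.im) ^ 2)⁻¹ =
      2 * z.im / ((x - z.re) ^ 2 + z.im ^ 2) := by
    field_simp; ring
  rw [inv_sub_inv (ofReal_sub_ne_zero_of_im_ne hz.ne' x)
    (ofReal_sub_ne_zero_of_im_ne (by simpa using hz.ne') x), sub_sub_sub_cancel_left, sub_conj,
    hprod, hreal]
  push_cast
  ring

lemma integrable_inv_one_add_sq_div_sub (a : ℝ) {b : ℝ} (hb : b ≠ 0) :
    Integrable fun x : ℝ => (1 + ((x - a) / b) ^ 2)⁻¹ :=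
  (integrable_inv_one_add_sq.comp_div hb).comp_sub_right a

lemma integral_inv_one_add_sq_div_sub (a b : ℝ) :
    ∫ x : ℝ, (1 + ((x - a) / b) ^ 2)⁻¹ = |b| * Real.pi := by
  rw [integral_sub_right_eq_self (fun x => (1 + (x / b) ^ 2)⁻¹) a,
    Measure.integral_comp_div (fun y => (1 + y ^ 2)⁻¹) b, integral_univ_inv_one_add_sq, smul_eq_mul]

lemma integrable_inv_ofReal_sub_sub_inv_ofReal_sub_conj {z : ℂ} (hz : 0 < z.im) :
    Integrable fun x : ℝ => ((x : ℂ) - z)⁻¹ - ((x : ℂ) - conj z)⁻¹ := by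
  simp_rw [inv_ofReal_sub_sub_inv_ofReal_sub_conj hz]
  exact (((integrable_inv_one_add_sq_div_sub z.re hz.ne').const_mul _).ofReal).mul_const I

lemma integral_inv_ofReal_sub_sub_inv_ofReal_sub_conj {z : ℂ} (hz : 0 < z.im) :
    ∫ x : ℝ, (((x : ℂ) - z)⁻¹ - ((x : ℂ) - conj z)⁻¹) = 2 * Real.pi * I := by
  simp_rw [inv_ofReal_sub_sub_inv_ofReal_sub_conj hz]
  rw [integral_mul_const, integral_complex_ofReal, integral_const_mul,
    integral_inv_one_add_sq_div_sub, abs_of_pos hz]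
  field_simp
  push_cast
  ring

lemma eventually_cobounded_inf_principal_iff {E : Type*} [SeminormedAddGroup E] {s : Set E}
    {p : E → Prop} : (∀ᶠ x in cobounded E ⊓ 𝓟 s, p x) ↔ ∃ R, ∀ x ∈ s, R ≤ ‖x‖ → p x := by
  simp only [eventually_inf_principal, ← comap_norm_atTop, eventually_comap, eventually_atTop]
  exact ⟨fun ⟨R, h⟩ => ⟨R, fun x hx hR => h _ hR x rfl hx⟩,
    fun ⟨R, h⟩ => ⟨R, fun r hr x hx hs => h x hs (hx ▸ hr)⟩⟩

lemma isBigO_inv_norm_sq_inv_one_add_sq :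
    (fun x : ℝ => ‖x‖⁻¹ ^ 2) =O[cocompact ℝ] fun x => (1 + x ^ 2)⁻¹ := by
  refine IsBigO.of_bound 2 ?_
  filter_upwards [tendsto_norm_cocompact_atTop.eventually_ge_atTop 1] with x hx
  have hx2 : 1 ≤ x ^ 2 := by rw [← sq_abs]; nlinarith [Real.norm_eq_abs x]
  have hnorm : ‖‖x‖⁻¹ ^ 2‖ = (x ^ 2)⁻¹ := by simp
  rw [hnorm, Real.norm_of_nonneg (by positivity), ← div_eq_mul_inv, inv_eq_one_div,
    div_le_div_iff₀ (by positivity) (by positivity)]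
  linarith

lemma isBigO_inv_sub_const {𝕜 : Type*} [NormedField 𝕜] (c : 𝕜) :
    (fun x => (x - c)⁻¹) =O[cobounded 𝕜] fun x => ‖x‖⁻¹ := by
  refine IsBigO.of_bound 2 ?_
  rw [← comap_norm_atTop]
  filter_upwards [preimage_mem_comap (eventually_gt_atTop (2 * ‖c‖))] with x (hx : 2 * ‖c‖ < ‖x‖)
  have hx0 : 0 < ‖x‖ := by linarith [norm_nonneg c]
  have hc : ‖x‖ / 2 ≤ ‖x - c‖ := by linarith [norm_sub_norm_le x c]
  calc ‖(x - c)⁻¹‖ = ‖x - c‖⁻¹ := norm_inv _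
    _ ≤ (‖x‖ / 2)⁻¹ := inv_anti₀ (by positivity) hc
    _ = 2 * ‖‖x‖⁻¹‖ := by rw [norm_inv, norm_norm, inv_div, div_eq_mul_inv]

lemma tendsto_ofReal_cocompact_cobounded_inf_principal :
    Tendsto ((↑) : ℝ → ℂ) (cocompact ℝ) (cobounded ℂ ⊓ 𝓟 {ζ | 0 ≤ ζ.im}) :=
  tendsto_inf.2
    ⟨Metric.cobounded_eq_cocompact (α := ℝ) ▸ RCLike.tendsto_ofReal_cobounded_cobounded ℂ,
      tendsto_principal.2 (Eventually.of_forall fun x => by simp)⟩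

lemma integrable_comp_ofReal_of_isBigO {F : ℂ → ℂ} (hc : ContinuousOn F {ζ | 0 ≤ ζ.im})
    (hF : F =O[cobounded ℂ ⊓ 𝓟 {ζ | 0 ≤ ζ.im}] fun ζ => ‖ζ‖⁻¹ ^ 2) :
    Integrable fun x : ℝ => F x := by
  refine LocallyIntegrable.integrable_of_isBigO_cocompact
    (hc.comp_continuous continuous_ofReal fun x => by simp).locallyIntegrable ?_
    (integrable_inv_one_add_sq.integrableAtFilter _)
  refine (hF.comp_tendsto tendsto_ofReal_cocompact_cobounded_inf_principal).trans ?_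
  simpa [Function.comp_def] using isBigO_inv_norm_sq_inv_one_add_sq

lemma exists_norm_le_div_sq_of_isBigO {F : ℂ → ℂ}
    (hF : F =O[cobounded ℂ ⊓ 𝓟 {ζ | 0 ≤ ζ.im}] fun ζ => ‖ζ‖⁻¹ ^ 2) :
    ∃ C, 0 ≤ C ∧ ∀ᶠ T in atTop, ∀ ζ : ℂ, 0 ≤ ζ.im → T ≤ ‖ζ‖ → ‖F ζ‖ ≤ C / T ^ 2 := by
  obtain ⟨C, hC, hCF⟩ := hF.exists_nonneg
  obtain ⟨R, hR⟩ := eventually_cobounded_inf_principal_iff.1 hCF.bound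
  refine ⟨C, hC, ?_⟩
  filter_upwards [eventually_ge_atTop R, eventually_gt_atTop 0] with T hRT hT ζ hζ hTζ
  calc ‖F ζ‖ ≤ C * ‖‖ζ‖⁻¹ ^ 2‖ := hR ζ hζ (hRT.trans hTζ)
    _ ≤ C / T ^ 2 := by
      rw [norm_pow, norm_inv, norm_norm, inv_pow, ← div_eq_mul_inv]
      gcongr

lemma tendsto_intervalIntegral_zero_of_norm_le {E : Type*} [NormedAddCommGroup E]
    [NormedSpace ℝ E] {φ : ℝ → ℝ → E} {a b : ℝ → ℝ} {C : ℝ} (hC : 0 ≤ C)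
    (hlen : ∀ᶠ T in atTop, |b T - a T| ≤ 2 * T)
    (hφ : ∀ᶠ T in atTop, ∀ t ∈ Set.uIoc (a T) (b T), ‖φ T t‖ ≤ C / T ^ 2) :
    Tendsto (fun T => ∫ t in a T..b T, φ T t) atTop (𝓝 0) := by
  have h2C : Tendsto (fun T : ℝ => 2 * C / T) atTop (𝓝 0) :=
    tendsto_const_nhds.div_atTop tendsto_id
  refine squeeze_zero_norm' ?_ h2C
  filter_upwards [hlen, hφ, eventually_gt_atTop 0] with T hT hφT hT0
  calc ‖∫ t in a T..b T, φ T t‖ ≤ C / T ^ 2 * |b T - a T| :=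
        intervalIntegral.norm_integral_le_of_norm_le_const hφT
    _ ≤ C / T ^ 2 * (2 * T) := by gcongr
    _ = 2 * C / T := by field_simp

lemma intervalIntegral_ofReal_eq_rect_boundary {F : ℂ → ℂ}
    (hc : ContinuousOn F {ζ | 0 ≤ ζ.im}) (hd : DifferentiableOn ℂ F {ζ | 0 < ζ.im}) {T : ℝ}
    (hT : 0 ≤ T) :
    ∫ x in -T..T, F x = (∫ x in -T..T, F (x + T * I)) - I • (∫ y in (0 : ℝ)..T, F (T + y * I))
      + I • ∫ y in (0 : ℝ)..T, F (-T + y * I) := by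
  have hrect := integral_boundary_rect_eq_zero_of_continuousOn_of_differentiableOn F
    (-T : ℂ) (T + T * I) (hc.mono fun ζ hζ => by
      simpa [hT] using (Complex.mem_reProdIm.1 hζ).2.1)
    (hd.mono fun ζ hζ => by simpa [hT] using (Complex.mem_reProdIm.1 hζ).2.1)
  simp only [neg_re, ofReal_re, neg_im, ofReal_im, neg_zero, add_re, mul_re, I_re, I_im,
    add_im, mul_im, ofReal_zero, zero_mul, add_zero, mul_zero, mul_one, sub_zero, zero_add] at hrect
  rw [← sub_eq_zero, ← hrect]
  push_cast
  ring

theorem integral_ofReal_eq_zero_of_isBigO {F : ℂ → ℂ}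
    (hc : ContinuousOn F {ζ | 0 ≤ ζ.im}) (hd : DifferentiableOn ℂ F {ζ | 0 < ζ.im})
    (hF : F =O[cobounded ℂ ⊓ 𝓟 {ζ | 0 ≤ ζ.im}] fun ζ => ‖ζ‖⁻¹ ^ 2) :
    ∫ x : ℝ, F x = 0 := by
  obtain ⟨C, hC, hfar⟩ := exists_norm_le_div_sq_of_isBigO hF
  have htop : Tendsto (fun T : ℝ => ∫ x in -T..T, F (x + T * I)) atTop (𝓝 0) := by
    refine tendsto_intervalIntegral_zero_of_norm_le hC ?_ ?_
    · filter_upwards [eventually_ge_atTop 0] with T hT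
      rw [sub_neg_eq_add, ← two_mul, abs_of_nonneg (by positivity)]
    · filter_upwards [hfar, eventually_ge_atTop 0] with T hT hT0 x _
      refine hT _ (by simpa using hT0) ?_
      simpa [abs_of_nonneg hT0] using abs_im_le_norm ((x : ℂ) + T * I)
  have hright : Tendsto (fun T : ℝ => ∫ y in (0 : ℝ)..T, F (T + y * I)) atTop (𝓝 0) := by
    refine tendsto_intervalIntegral_zero_of_norm_le hC ?_ ?_
    · filter_upwards [eventually_ge_atTop 0] with T hT
      rw [sub_zero, abs_of_nonneg hT]; linarith
    · filter_upwards [hfar, eventually_ge_atTop 0] with T hT hT0 y hy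
      rw [Set.uIoc_of_le hT0] at hy
      refine hT _ (by simpa using hy.1.le) ?_
      simpa [abs_of_nonneg hT0] using abs_re_le_norm ((T : ℂ) + y * I)
  have hleft : Tendsto (fun T : ℝ => ∫ y in (0 : ℝ)..T, F (-T + y * I)) atTop (𝓝 0) := by
    refine tendsto_intervalIntegral_zero_of_norm_le hC ?_ ?_
    · filter_upwards [eventually_ge_atTop 0] with T hT
      rw [sub_zero, abs_of_nonneg hT]; linarith
    · filter_upwards [hfar, eventually_ge_atTop 0] with T hT hT0 y hy
      rw [Set.uIoc_of_le hT0] at hy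
      refine hT _ (by simpa using hy.1.le) ?_
      simpa [abs_of_nonneg hT0] using abs_re_le_norm (-(T : ℂ) + y * I)
  refine tendsto_nhds_unique (intervalIntegral_tendsto_integral
    (integrable_comp_ofReal_of_isBigO hc hF) tendsto_neg_atTop_atBot tendsto_id) ?_
  have hboundary := (htop.sub (hright.const_smul I)).add (hleft.const_smul I)
  simp only [smul_zero, sub_zero, add_zero] at hboundary
  refine hboundary.congr' ?_
  filter_upwards [eventually_ge_atTop 0] with T hT
  exact (intervalIntegral_ofReal_eq_rect_boundary hc hd hT).symm

lemma isBigO_dslope_add_mul_inv_sub_conj {g : ℂ → ℂ}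
    (hg : g =O[cobounded ℂ ⊓ 𝓟 {ζ | 0 ≤ ζ.im}] fun ζ => ‖ζ‖⁻¹) (z : ℂ) :
    (fun ζ => dslope g z ζ + g z * (ζ - conj z)⁻¹)
      =O[cobounded ℂ ⊓ 𝓟 {ζ | 0 ≤ ζ.im}] fun ζ => ‖ζ‖⁻¹ ^ 2 := by
  have hinv := fun c : ℂ =>
    (isBigO_inv_sub_const c).mono (inf_le_left (b := 𝓟 {ζ : ℂ | 0 ≤ ζ.im}))
  have hO := (hg.mul (hinv z)).sub
    (((hinv z).mul (hinv (conj z))).const_mul_left (g z * (z - conj z)))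
  refine hO.congr' ?_ (Eventually.of_forall fun ζ => (sq _).symm)
  filter_upwards [(eventually_cobounded_inf_principal_iff
    (p := fun ζ : ℂ => ‖z‖ + 1 ≤ ‖ζ‖)).2 ⟨‖z‖ + 1, fun _ _ h => h⟩] with ζ hζ
  have hζz : ζ - z ≠ 0 := fun h => by rw [sub_eq_zero.1 h] at hζ; linarith
  have hζz' : ζ - conj z ≠ 0 := fun h => by rw [sub_eq_zero.1 h, norm_conj] at hζ; linarith
  rw [dslope_of_ne _ (sub_ne_zero.1 hζz), slope_def_field]
  field_simp
  ring

theorem integral_div_ofReal_sub_eq_two_pi_I_mul {g : ℂ → ℂ}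
    (hc : ContinuousOn g {ζ | 0 ≤ ζ.im}) (hd : DifferentiableOn ℂ g {ζ | 0 < ζ.im})
    (hg : g =O[cobounded ℂ ⊓ 𝓟 {ζ | 0 ≤ ζ.im}] fun ζ => ‖ζ‖⁻¹) {z : ℂ} (hz : 0 < z.im) :
    ∫ x : ℝ, g x / (x - z) = 2 * Real.pi * I * g z := by
  have hopen : {ζ : ℂ | 0 < ζ.im} ∈ 𝓝 z := (isOpen_lt continuous_const continuous_im).mem_nhds hz
  have hclosed : {ζ : ℂ | 0 ≤ ζ.im} ∈ 𝓝 z :=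
    mem_of_superset hopen fun ζ (h : 0 < ζ.im) => show 0 ≤ ζ.im from h.le
  have hconj : ∀ ζ : ℂ, 0 ≤ ζ.im → ζ - conj z ≠ 0 := fun ζ hζ h => by
    have := congrArg Complex.im h
    simp only [sub_im, conj_im, sub_neg_eq_add, zero_im] at this
    linarith
  set F : ℂ → ℂ := fun ζ => dslope g z ζ + g z * (ζ - conj z)⁻¹ with hFdef
  have hFc : ContinuousOn F {ζ | 0 ≤ ζ.im} :=
    ((continuousOn_dslope hclosed).2 ⟨hc, hd.differentiableAt hopen⟩).add
      (continuousOn_const.mul ((continuousOn_id.sub continuousOn_const).inv₀ hconj))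
  have hFd : DifferentiableOn ℂ F {ζ | 0 < ζ.im} :=
    ((differentiableOn_dslope hopen).2 hd).add (differentiableOn_const _ |>.mul
      ((differentiableOn_id.sub (differentiableOn_const _)).inv fun ζ hζ => hconj ζ (le_of_lt hζ)))
  have hFO : F =O[cobounded ℂ ⊓ 𝓟 {ζ | 0 ≤ ζ.im}] fun ζ => ‖ζ‖⁻¹ ^ 2 :=
    isBigO_dslope_add_mul_inv_sub_conj hg z
  have hsplit : ∀ x : ℝ, g x / (x - z) = F x + g z * (((x : ℂ) - z)⁻¹ - ((x : ℂ) - conj z)⁻¹) := by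
    intro x
    simp only [hFdef, dslope_of_ne _ (sub_ne_zero.1 (ofReal_sub_ne_zero_of_im_ne hz.ne' x)),
      slope_def_field]
    ring
  simp_rw [hsplit]
  rw [integral_add (integrable_comp_ofReal_of_isBigO hFc hFO)
      ((integrable_inv_ofReal_sub_sub_inv_ofReal_sub_conj hz).const_mul _),
    integral_const_mul, integral_ofReal_eq_zero_of_isBigO hFc hFd hFO,
    integral_inv_ofReal_sub_sub_inv_ofReal_sub_conj hz]
  ring

lemma one_sub_mul_norm_le_norm_sub_mul {R : Type*} [SeminormedRing R] {a b c : R} {δ : ℝ}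
    (hc : ‖c‖ ≤ δ) (hb : ‖b‖ ≤ ‖a‖) : (1 - δ) * ‖a‖ ≤ ‖a - c * b‖ := by
  have hcb : ‖c * b‖ ≤ δ * ‖a‖ :=
    (norm_mul_le c b).trans (mul_le_mul hc hb (norm_nonneg b) ((norm_nonneg c).trans hc))
  linarith [norm_sub_norm_le a (c * b)]

lemma sub_mul_ne_zero_of_norm_le {R : Type*} [NormedRing R] {a b c : R} {δ : ℝ} (hδ : δ < 1)
    (ha : a ≠ 0) (hc : ‖c‖ ≤ δ) (hb : ‖b‖ ≤ ‖a‖) : a - c * b ≠ 0 := by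
  rw [← norm_pos_iff]
  exact (mul_pos (sub_pos.2 hδ) (norm_pos_iff.2 ha)).trans_le
    (one_sub_mul_norm_le_norm_sub_mul hc hb)

lemma norm_div_mul_sub_mul_le {𝕜 : Type*} [NormedField 𝕜] {a b c : 𝕜} {δ : ℝ} (hδ : δ < 1)
    (ha : a ≠ 0) (hc : ‖c‖ ≤ δ) (hb : ‖b‖ ≤ ‖a‖) :
    ‖c / (a * (a - c * b))‖ ≤ δ / (1 - δ) * ‖a‖⁻¹ ^ 2 := by
  have ha' : 0 < ‖a‖ := norm_pos_iff.2 ha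
  have hδ' : 0 < 1 - δ := sub_pos.2 hδ
  rw [norm_div, norm_mul]
  calc ‖c‖ / (‖a‖ * ‖a - c * b‖) ≤ δ / (‖a‖ * ((1 - δ) * ‖a‖)) :=
        div_le_div₀ ((norm_nonneg c).trans hc) hc (by positivity)
          (mul_le_mul_of_nonneg_left (one_sub_mul_norm_le_norm_sub_mul hc hb) ha'.le)
    _ = δ / (1 - δ) * ‖a‖⁻¹ ^ 2 := by field_simp

def schwarzReflection (f : ℂ → ℂ) (z : ℂ) : ℂ := conj (f (conj z))

lemma Differentiable.schwarzReflection {f : ℂ → ℂ} (hf : Differentiable ℂ f) :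
    Differentiable ℂ (schwarzReflection f) := fun z => by
  have h := (hf (conj z)).conj_conj
  rwa [conj_conj] at h

section

variable {f w : ℂ → ℂ} {δ : ℝ}

lemma schwarzReflection_ne_zero (hM1 : ∀ z : ℂ, z.im ≤ 0 → f z ≠ 0) {z : ℂ} (hz : 0 ≤ z.im) :
    schwarzReflection f z ≠ 0 := by
  simpa [schwarzReflection] using hM1 (conj z) (by simpa using hz)

lemma schwarzReflection_mul_sub_ne_zero (hM1 : ∀ z : ℂ, z.im ≤ 0 → f z ≠ 0)
    (hM2 : ∀ z : ℂ, 0 ≤ z.im → ‖f z‖ ≤ ‖schwarzReflection f z‖) (hδ : δ < 1)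
    (hwb : ∀ z : ℂ, 0 ≤ z.im → ‖w z‖ ≤ δ) {z : ℂ} (hz : 0 ≤ z.im) :
    schwarzReflection f z * (schwarzReflection f z - w z * f z) ≠ 0 :=
  mul_ne_zero (schwarzReflection_ne_zero hM1 hz)
    (sub_mul_ne_zero_of_norm_le hδ (schwarzReflection_ne_zero hM1 hz) (hwb z hz) (hM2 z hz))

lemma continuousOn_div_schwarzReflection_mul_sub (hf : Differentiable ℂ f)
    (hM1 : ∀ z : ℂ, z.im ≤ 0 → f z ≠ 0)
    (hM2 : ∀ z : ℂ, 0 ≤ z.im → ‖f z‖ ≤ ‖schwarzReflection f z‖) (hδ : δ < 1)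
    (hwc : ContinuousOn w {z : ℂ | 0 ≤ z.im}) (hwb : ∀ z : ℂ, 0 ≤ z.im → ‖w z‖ ≤ δ) :
    ContinuousOn (fun z => w z / (schwarzReflection f z * (schwarzReflection f z - w z * f z)))
      {z : ℂ | 0 ≤ z.im} :=
  have hfb := hf.schwarzReflection.continuous.continuousOn
  hwc.div (hfb.mul (hfb.sub (hwc.mul hf.continuous.continuousOn)))
    fun _ hz => schwarzReflection_mul_sub_ne_zero hM1 hM2 hδ hwb hz

lemma differentiableOn_div_schwarzReflection_mul_sub (hf : Differentiable ℂ f)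
    (hM1 : ∀ z : ℂ, z.im ≤ 0 → f z ≠ 0)
    (hM2 : ∀ z : ℂ, 0 ≤ z.im → ‖f z‖ ≤ ‖schwarzReflection f z‖) (hδ : δ < 1)
    (hwh : DifferentiableOn ℂ w {z : ℂ | 0 < z.im}) (hwb : ∀ z : ℂ, 0 ≤ z.im → ‖w z‖ ≤ δ) :
    DifferentiableOn ℂ
      (fun z => w z / (schwarzReflection f z * (schwarzReflection f z - w z * f z)))
      {z : ℂ | 0 < z.im} :=
  have hfb := hf.schwarzReflection.differentiableOn
  hwh.div (hfb.mul (hfb.sub (hwh.mul hf.differentiableOn)))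
    fun _ hz => schwarzReflection_mul_sub_ne_zero hM1 hM2 hδ hwb (le_of_lt hz)

lemma isBigO_div_schwarzReflection_mul_sub (hM1 : ∀ z : ℂ, z.im ≤ 0 → f z ≠ 0)
    (hM2 : ∀ z : ℂ, 0 ≤ z.im → ‖f z‖ ≤ ‖schwarzReflection f z‖) (hδ : δ < 1)
    (hwb : ∀ z : ℂ, 0 ≤ z.im → ‖w z‖ ≤ δ)
    (hgrowth : ∃ R, ∀ z : ℂ, z.im ≤ 0 → R ≤ ‖z‖ → ‖z‖ ≤ ‖f z‖) :
    (fun z => w z / (schwarzReflection f z * (schwarzReflection f z - w z * f z)))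
      =O[cobounded ℂ ⊓ 𝓟 {z : ℂ | 0 ≤ z.im}] fun z => ‖z‖⁻¹ := by
  obtain ⟨R, hR⟩ := hgrowth
  refine IsBigO.of_bound (δ / (1 - δ)) (eventually_cobounded_inf_principal_iff.2 ⟨max R 1, ?_⟩)
  intro z hz hRz
  have hz1 : 1 ≤ ‖z‖ := le_of_max_le_right hRz
  have hfz : ‖z‖ ≤ ‖schwarzReflection f z‖ := by
    simpa [schwarzReflection] using
      hR (conj z) (by simpa using hz) (by simpa using le_of_max_le_left hRz)
  have hδ0 : 0 ≤ δ / (1 - δ) := div_nonneg ((norm_nonneg _).trans (hwb z hz)) (sub_pos.2 hδ).le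
  calc _ ≤ δ / (1 - δ) * ‖schwarzReflection f z‖⁻¹ ^ 2 :=
        norm_div_mul_sub_mul_le hδ (schwarzReflection_ne_zero hM1 hz) (hwb z hz) (hM2 z hz)
    _ ≤ δ / (1 - δ) * ‖z‖⁻¹ := by
        gcongr
        calc ‖schwarzReflection f z‖⁻¹ ^ 2 ≤ ‖schwarzReflection f z‖⁻¹ :=
              pow_le_of_le_one (by positivity) (inv_le_one_of_one_le₀ (hz1.trans hfz)) two_ne_zero
          _ ≤ ‖z‖⁻¹ := inv_anti₀ (by positivity) hfz
    _ = δ / (1 - δ) * ‖‖z‖⁻¹‖ := by rw [norm_inv, norm_norm]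

end

/-- Evaluation of the integral `J₂` (formula (2.24)): under (M1)–(M3) on the entire
function `f` and `|w| ≤ δ < 1` on the closed upper half-plane (`w` continuous there and
holomorphic on the open half-plane), for every `z` with `Im z > 0`,
`(1/π)·∫_ℝ w(x)/(f̄(x)·(f̄(x) - w(x)f(x))·(x - z)) dx
  = 2i·w(z)/(f̄(z)·(f̄(z) - w(z)f(z)))`, where `f̄(z) = conj (f (conj z))`. -/
theorem J2_residue_evaluation
    (f : ℂ → ℂ) (hf : Differentiable ℂ f)
    (hM1 : ∀ z : ℂ, z.im ≤ 0 → f z ≠ 0)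
    (hM2 : ∀ z : ℂ, 0 ≤ z.im →
      ‖f z‖ ≤ ‖(starRingEnd ℂ) (f ((starRingEnd ℂ) z))‖)
    (hM3 : ∀ m : ℕ, ∀ ε : ℝ, 0 < ε → ∃ R : ℝ, 0 < R ∧ ∀ z : ℂ, z.im ≤ 0 →
      R ≤ ‖z‖ → ‖z‖ ^ m ≤ ε * ‖f z‖)
    (δ : ℝ) (hδ : δ ∈ Set.Ioo (0 : ℝ) 1)
    (w : ℂ → ℂ)
    (hwc : ContinuousOn w {z : ℂ | 0 ≤ z.im})
    (hwh : DifferentiableOn ℂ w {z : ℂ | 0 < z.im})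
    (hwb : ∀ z : ℂ, 0 ≤ z.im → ‖w z‖ ≤ δ) :
    ∀ z : ℂ, 0 < z.im →
      (1 / (Real.pi : ℂ)) * ∫ x : ℝ, w (x : ℂ) /
          ((starRingEnd ℂ) (f (x : ℂ)) *
            ((starRingEnd ℂ) (f (x : ℂ)) - w (x : ℂ) * f (x : ℂ)) * ((x : ℂ) - z)) =
        2 * Complex.I * w z /
          ((starRingEnd ℂ) (f ((starRingEnd ℂ) z)) *
            ((starRingEnd ℂ) (f ((starRingEnd ℂ) z)) - w z * f z)) := by
  intro z hz
  obtain ⟨R, -, hR⟩ := hM3 1 1 one_pos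
  have hgrowth : ∃ R, ∀ ζ : ℂ, ζ.im ≤ 0 → R ≤ ‖ζ‖ → ‖ζ‖ ≤ ‖f ζ‖ :=
    ⟨R, fun ζ hζ hRζ => by simpa using hR ζ hζ hRζ⟩
  have hcauchy := integral_div_ofReal_sub_eq_two_pi_I_mul
    (continuousOn_div_schwarzReflection_mul_sub hf hM1 hM2 hδ.2 hwc hwb)
    (differentiableOn_div_schwarzReflection_mul_sub hf hM1 hM2 hδ.2 hwh hwb)
    (isBigO_div_schwarzReflection_mul_sub hM1 hM2 hδ.2 hwb hgrowth) hz
  simp only [schwarzReflection, conj_ofReal, div_div] at hcauchy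
  rw [hcauchy]
  have hπ : (Real.pi : ℂ) ≠ 0 := ofReal_ne_zero.2 Real.pi_ne_zero
  field_simp
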